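/- arXiv:1710.08800 — 3 statements merged into one kernel-verified Lean document; each statement's English description precedes it below -/
import Mathlib

section
/- Let N ≥ 1, let S_1, …, S_N be finite nonempty sets, let N₀ > 0, and for each player i let s_i : S_i → ℝ with s_i(x_i) ≥ 0 for all x_i ∈ S_i. Define the payoff t_i(x) = log₂(1 + s_i(x_i)/(N₀ + Σ_{j ≠ i} s_j(x_j))) for x ∈ S_1 × ⋯ × S_N, and define t(x) = log₂(1 + (Σ_{j=1}^N s_j(x_j))/N₀). Then T̂(z) = Σ_{x} (∏_{l=1}^N z_l(x_l)) · t(x) is an exact potential for the expected payoffs T_i: for every player i, every pair of mixed strategies z_i, ẑ_i of player i, and every mixed profile z_{-i}, T_i(z_i, z_{-i}) − T_i(ẑ_i, z_{-i}) = T̂(z_i, z_{-i}) − T̂(ẑ_i, z_{-i}). -/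
/-!
Since `1 + s_i/(N₀ + I_i) = (N₀ + ∑ s_j)/(N₀ + I_i)` with `I_i = ∑_{j ≠ i} s_j`, the payoff of
player `i` differs from the potential `log₂((N₀ + ∑ s_j)/N₀)` by `log₂ N₀ - log₂ (N₀ + I_i)`,
which does not depend on player `i`'s own action. The expectation of such a function under a
product of mixed strategies does not depend on player `i`'s mixed strategy, so this correction
cancels in the difference.
-/

open Finset Function

theorem Real.logb_one_add_div_sub_logb_one_add_div {b a c d : ℝ} (hc : c ≠ 0)
    (hcd : c + d ≠ 0) (hacd : c + (a + d) ≠ 0) :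
    Real.logb b (1 + a / (c + d)) - Real.logb b (1 + (a + d) / c)
      = Real.logb b c - Real.logb b (c + d) := by
  have h₁ : 1 + a / (c + d) = (c + (a + d)) / (c + d) := by field_simp; ring
  have h₂ : 1 + (a + d) / c = (c + (a + d)) / c := by field_simp
  rw [h₁, h₂, Real.logb_div hacd hcd, Real.logb_div hacd hc]
  ring

section MixedExtension

variable {ι : Type*} [Fintype ι] [DecidableEq ι] {S : ι → Type*} {R : Type*} [CommSemiring R]

theorem prod_update_apply (z : ∀ j, S j → R) (i : ι) (w : S i → R) (x : ∀ j, S j) :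
    ∏ l, update z i w l (x l) = w (x i) * ∏ l ∈ univ.erase i, z l (x l) := by
  rw [← mul_prod_erase _ _ (mem_univ i), update_self]
  congr 1
  exact prod_congr rfl fun l hl => by rw [update_of_ne (ne_of_mem_erase hl)]

variable [∀ i, Fintype (S i)]

theorem sum_apply_mul_eq_of_dependsOn {G : (∀ j, S j) → R} {i : ι} (hG : DependsOn G {i}ᶜ)
    {w w' : S i → R} (h : ∑ a, w a = ∑ a, w' a) :
    ∑ x, w (x i) * G x = ∑ x, w' (x i) * G x := by
  let e := Equiv.piSplitAt i S
  have hfiber : ∀ a b, ∑ y, G (e.symm (a, y)) = ∑ y, G (e.symm (b, y)) := fun a b =>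
    sum_congr rfl fun y _ => hG fun j (hj : j ≠ i) => by simp [e, Equiv.piSplitAt, hj]
  have hsplit : ∀ v : S i → R, ∑ x, v (x i) * G x = ∑ a, v a * ∑ y, G (e.symm (a, y)) := by
    intro v
    rw [← e.symm.sum_comp, Fintype.sum_prod_type]
    simp_rw [mul_sum]
    simp [e, Equiv.piSplitAt]
  rw [hsplit, hsplit]
  rcases isEmpty_or_nonempty (S i) with hS | ⟨⟨a₀⟩⟩
  · simp
  · simp_rw [hfiber _ a₀, ← sum_mul, h]

def expectedPayoff (z : ∀ j, S j → R) (f : (∀ j, S j) → R) : R :=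
  ∑ x, (∏ l, z l (x l)) * f x

theorem expectedPayoff_add (z : ∀ j, S j → R) (f g : (∀ j, S j) → R) :
    expectedPayoff z (fun x => f x + g x) = expectedPayoff z f + expectedPayoff z g := by
  simp only [expectedPayoff, mul_add, sum_add_distrib]

theorem expectedPayoff_update_of_dependsOn {f : (∀ j, S j) → R} {i : ι} (hf : DependsOn f {i}ᶜ)
    (z : ∀ j, S j → R) {w : S i → R} (hw : ∑ a, w a = ∑ a, z i a) :
    expectedPayoff (update z i w) f = expectedPayoff z f := by
  conv_rhs => rw [← update_eq_self i z]
  simp only [expectedPayoff, prod_update_apply, mul_assoc]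
  refine sum_apply_mul_eq_of_dependsOn (fun x y hxy => ?_) hw
  rw [prod_congr rfl fun l hl => congrArg (z l) (hxy l (ne_of_mem_erase hl)), hf hxy]

end MixedExtension

theorem interference_game_has_exact_potential_general
    {N : ℕ} (S : Fin N → Type*)
    [∀ i, Fintype (S i)]
    (N₀ : ℝ) (hN₀ : 0 < N₀)
    (s : ∀ i : Fin N, S i → ℝ) (hs : ∀ i xi, 0 ≤ s i xi)
    (z : ∀ j, S j → ℝ) (hz1 : ∀ j, ∑ xj, z j xj = 1)
    (i : Fin N) (zi' : S i → ℝ) (hz1' : ∑ xi, zi' xi = 1) :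
    (∑ x : ∀ j, S j, (∏ l, z l (x l)) *
        Real.logb 2 (1 + s i (x i) / (N₀ + ∑ j ∈ Finset.univ.erase i, s j (x j))))
      - (∑ x : ∀ j, S j, (∏ l, Function.update z i zi' l (x l)) *
          Real.logb 2 (1 + s i (x i) / (N₀ + ∑ j ∈ Finset.univ.erase i, s j (x j))))
    = (∑ x : ∀ j, S j, (∏ l, z l (x l)) *
        Real.logb 2 (1 + (∑ j, s j (x j)) / N₀))
      - (∑ x : ∀ j, S j, (∏ l, Function.update z i zi' l (x l)) *
          Real.logb 2 (1 + (∑ j, s j (x j)) / N₀)) := by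
  set interference : (∀ j, S j) → ℝ := fun x => ∑ j ∈ univ.erase i, s j (x j)
  set potential : (∀ j, S j) → ℝ := fun x => Real.logb 2 (1 + (∑ j, s j (x j)) / N₀)
  set correction : (∀ j, S j) → ℝ := fun x => Real.logb 2 N₀ - Real.logb 2 (N₀ + interference x)
  have hpayoff : (fun x => Real.logb 2 (1 + s i (x i) / (N₀ + interference x)))
      = fun x => potential x + correction x := by
    funext x
    have hI : 0 ≤ interference x := sum_nonneg fun j _ => hs j (x j)
    have hlog := Real.logb_one_add_div_sub_logb_one_add_div (b := 2) (a := s i (x i))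
      (d := interference x) hN₀.ne' (by positivity) (by linarith [hs i (x i)])
    have htotal : s i (x i) + interference x = ∑ j, s j (x j) :=
      add_sum_erase _ (fun j => s j (x j)) (mem_univ i)
    rw [htotal] at hlog
    simp only [potential, correction]
    linarith
  have hcorrection : DependsOn correction {i}ᶜ := fun x y hxy => by
    simp only [correction, interference]
    rw [sum_congr rfl fun j hj => congrArg (s j) (hxy j (ne_of_mem_erase hj))]
  change expectedPayoff z _ - expectedPayoff (update z i zi') _
    = expectedPayoff z potential - expectedPayoff (update z i zi') potential
  rw [hpayoff, expectedPayoff_add, expectedPayoff_add,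
    expectedPayoff_update_of_dependsOn hcorrection z (hz1' ▸ (hz1 i).symm)]
  ring

/-- For the interference-channel payoffs
`t_i(x) = log₂(1 + s_i(x_i)/(N₀ + ∑_{j≠i} s_j(x_j)))`, the multilinear extension of
`t(x) = log₂(1 + (∑_j s_j(x_j))/N₀)` is an exact potential for the expected payoffs. -/
theorem interference_game_has_exact_potential
    {N : ℕ} (hN : 1 ≤ N) (S : Fin N → Type*)
    [∀ i, Fintype (S i)] [∀ i, Nonempty (S i)]
    (N₀ : ℝ) (hN₀ : 0 < N₀)
    (s : ∀ i : Fin N, S i → ℝ) (hs : ∀ i xi, 0 ≤ s i xi)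
    (z : ∀ j, S j → ℝ) (hz0 : ∀ j xj, 0 ≤ z j xj) (hz1 : ∀ j, ∑ xj, z j xj = 1)
    (i : Fin N) (zi' : S i → ℝ) (hz0' : ∀ xi, 0 ≤ zi' xi) (hz1' : ∑ xi, zi' xi = 1) :
    (∑ x : ∀ j, S j, (∏ l, z l (x l)) *
        Real.logb 2 (1 + s i (x i) / (N₀ + ∑ j ∈ Finset.univ.erase i, s j (x j))))
      - (∑ x : ∀ j, S j, (∏ l, Function.update z i zi' l (x l)) *
          Real.logb 2 (1 + s i (x i) / (N₀ + ∑ j ∈ Finset.univ.erase i, s j (x j))))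
    = (∑ x : ∀ j, S j, (∏ l, z l (x l)) *
        Real.logb 2 (1 + (∑ j, s j (x j)) / N₀))
      - (∑ x : ∀ j, S j, (∏ l, Function.update z i zi' l (x l)) *
          Real.logb 2 (1 + (∑ j, s j (x j)) / N₀)) :=
  interference_game_has_exact_potential_general S N₀ hN₀ s hs z hz1 i zi' hz1'
end

section
/- Let (Ω, F, P) be a probability space, let k ≥ 1 be an integer, let N₀ > 0, and let 0 < μ ≤ b. Let (X_j)_{j≥1} be independent random variables with 0 ≤ X_j ≤ b almost surely and E[X_j] ≥ μ for every j. Then there exist constants c₁ > 0 and c₂ > 0 such that for all N ≥ 1, c₁ ≤ E[ N^k / (Σ_{j=1}^N X_j + N₀)^k ] ≤ c₂. -/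
/-!
Write `S_N = ∑_{j<N} X_j`, so that `0 ≤ S_N ≤ N b` almost surely. The lower bound is pointwise:
`S_N + N₀ ≤ N (b + N₀)`, hence `N / (S_N + N₀) ≥ 1 / (b + N₀)`.

For the upper bound, split along the event `S_N ≤ N μ / 2`. Off it the integrand is at most
`(2 / μ)^k`; on it, at most `(N / N₀)^k`. The centred variables `E X_j - X_j` are independent
and sub-Gaussian with parameter `b² / 4` (Hoeffding's lemma), so Hoeffding's inequality bounds
the probability of the event by `exp (-c N)` with `c = (μ / b)² / 2`, and `N^k e^{-c N}` is
bounded by `k! / c^k`.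
-/

open MeasureTheory ProbabilityTheory Real Finset
open scoped Nat

lemma pow_mul_exp_neg_mul_le_factorial_div {x c : ℝ} (hx : 0 ≤ x) (hc : 0 < c) (k : ℕ) :
    x ^ k * exp (-(c * x)) ≤ k ! / c ^ k := by
  have h := pow_div_factorial_le_exp (x := c * x) (by positivity) k
  rw [div_le_iff₀ (by positivity), mul_pow] at h
  rw [exp_neg, ← div_eq_mul_inv, div_le_div_iff₀ (exp_pos _) (by positivity)]
  linarith

lemma inv_add_pow_le_div_add_pow {n s b N₀ : ℝ} (hn : 1 ≤ n) (hN₀ : 0 < N₀) (hs : 0 ≤ s)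
    (hsb : s ≤ n * b) (k : ℕ) : (b + N₀)⁻¹ ^ k ≤ (n / (s + N₀)) ^ k := by
  have hb : 0 ≤ b := by nlinarith
  gcongr
  rw [inv_eq_one_div, div_le_div_iff₀ (by positivity) (by positivity)]
  nlinarith

section

variable {Ω : Type*} [MeasurableSpace Ω] {P : Measure Ω} {X : ℕ → Ω → ℝ} {b : ℝ}

lemma integral_le_add_measureReal_mul [IsFiniteMeasure P] {f : Ω → ℝ} {s : Set Ω} {A B : ℝ}
    (hs : MeasurableSet s) (hB : 0 ≤ B) (hf0 : 0 ≤ᵐ[P] f) (hfA : ∀ᵐ ω ∂P, f ω ≤ A)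
    (hfB : ∀ᵐ ω ∂P, ω ∉ s → f ω ≤ B) :
    ∫ ω, f ω ∂P ≤ P.real Set.univ * B + P.real s * A := by
  have hf_le : ∀ᵐ ω ∂P, f ω ≤ B + s.indicator (fun _ ↦ A) ω := by
    filter_upwards [hfA, hfB] with ω hωA hωB
    by_cases hω : ω ∈ s
    · rw [Set.indicator_of_mem hω]; linarith
    · rw [Set.indicator_of_notMem hω, add_zero]; exact hωB hω
  calc ∫ ω, f ω ∂P ≤ ∫ ω, B + s.indicator (fun _ ↦ A) ω ∂P :=
        integral_mono_of_nonneg hf0 ((integrable_const B).add ((integrable_const A).indicator hs))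
          hf_le
    _ = P.real Set.univ * B + P.real s * A := by
        rw [integral_add (integrable_const B) ((integrable_const A).indicator hs),
          integral_const, integral_indicator_const A hs, smul_eq_mul, smul_eq_mul]

lemma ae_sum_range_mem_Icc (hbdd : ∀ j, ∀ᵐ ω ∂P, 0 ≤ X j ω ∧ X j ω ≤ b) (N : ℕ) :
    ∀ᵐ ω ∂P, 0 ≤ ∑ j ∈ range N, X j ω ∧ ∑ j ∈ range N, X j ω ≤ N * b := by
  filter_upwards [ae_all_iff.2 hbdd] with ω hω
  refine ⟨sum_nonneg fun j _ ↦ (hω j).1, ?_⟩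
  simpa using sum_le_card_nsmul (range N) (fun j ↦ X j ω) b fun j _ ↦ (hω j).2

variable [IsProbabilityMeasure P] {μ N₀ : ℝ}

lemma measureReal_sum_range_le_half_le_exp (hmeas : ∀ j, Measurable (X j)) (hindep : iIndepFun X P)
    (hbdd : ∀ j, ∀ᵐ ω ∂P, 0 ≤ X j ω ∧ X j ω ≤ b) (hμ : 0 ≤ μ)
    (hmean : ∀ j, μ ≤ ∫ ω, X j ω ∂P) (N : ℕ) :
    P.real {ω | ∑ j ∈ range N, X j ω ≤ N * μ / 2} ≤ exp (-((μ / b) ^ 2 / 2 * N)) := by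
  set Y : ℕ → Ω → ℝ := fun j ω ↦ (∫ ω', X j ω' ∂P) - X j ω
  have hY_indep : iIndepFun Y P :=
    hindep.comp (fun j (x : ℝ) ↦ (∫ ω, X j ω ∂P) - x) fun _ ↦
      measurable_const.sub measurable_id
  have hY_subG (j : ℕ) : HasSubgaussianMGF (Y j) ((‖b - 0‖₊ / 2) ^ 2) P := by
    have := (hasSubgaussianMGF_of_mem_Icc (hmeas j).aemeasurable (hbdd j)).neg
    exact this.congr (ae_of_all _ fun ω ↦ by simp [Y])
  have hsubset : {ω | ∑ j ∈ range N, X j ω ≤ N * μ / 2}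
      ⊆ {ω | N * μ / 2 ≤ ∑ j ∈ range N, Y j ω} := by
    intro ω hω
    have hsum_mean : (N : ℝ) * μ ≤ ∑ j ∈ range N, ∫ ω', X j ω' ∂P := by
      simpa using card_nsmul_le_sum (range N) (fun j ↦ ∫ ω', X j ω' ∂P) μ fun j _ ↦ hmean j
    simp only [Set.mem_ofPred_eq, Y, Finset.sum_sub_distrib] at hω ⊢
    linarith
  calc P.real {ω | ∑ j ∈ range N, X j ω ≤ N * μ / 2}
      ≤ P.real {ω | N * μ / 2 ≤ ∑ j ∈ range N, Y j ω} := measureReal_mono hsubset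
    _ ≤ exp (-(N * μ / 2) ^ 2 / (2 * N * ((‖b - 0‖₊ / 2) ^ 2 : NNReal))) :=
        HasSubgaussianMGF.measure_sum_range_ge_le_of_iIndepFun hY_indep (fun j _ ↦ hY_subG j)
          (by positivity)
    _ = exp (-((μ / b) ^ 2 / 2 * N)) := by
        congr 1
        push_cast
        rw [sub_zero, norm_eq_abs, div_pow |b|, sq_abs]
        rcases eq_or_ne (N : ℝ) 0 with hN | hN
        · simp [hN]
        rcases eq_or_ne b 0 with hb | hb
        · simp [hb]
        field_simp

lemma inv_add_pow_le_integral_div_sum_range_add_pow (hmeas : ∀ j, Measurable (X j))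
    (hbdd : ∀ j, ∀ᵐ ω ∂P, 0 ≤ X j ω ∧ X j ω ≤ b) (hN₀ : 0 < N₀) {N : ℕ} (hN : 1 ≤ N) (k : ℕ) :
    (b + N₀)⁻¹ ^ k ≤ ∫ ω, (N / (∑ j ∈ range N, X j ω + N₀)) ^ k ∂P := by
  have hSmeas : Measurable fun ω ↦ ∑ j ∈ range N, X j ω :=
    Finset.measurable_sum _ fun j _ ↦ hmeas j
  have hint : Integrable (fun ω ↦ (N / (∑ j ∈ range N, X j ω + N₀)) ^ k) P := by
    refine .of_bound ((hSmeas.add_const N₀).const_div _ |>.pow_const k).aestronglyMeasurable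
      ((N / N₀) ^ k) ?_
    filter_upwards [ae_sum_range_mem_Icc hbdd N] with ω ⟨hS0, _⟩
    rw [norm_eq_abs, abs_of_nonneg (by positivity)]
    gcongr
    linarith
  calc (b + N₀)⁻¹ ^ k = ∫ _, (b + N₀)⁻¹ ^ k ∂P := by simp
    _ ≤ _ := integral_mono_ae (integrable_const _) hint <| by
        filter_upwards [ae_sum_range_mem_Icc hbdd N] with ω ⟨hS0, hSb⟩
        exact inv_add_pow_le_div_add_pow (by exact_mod_cast hN) hN₀ hS0 hSb k

lemma integral_div_sum_range_add_pow_le (hmeas : ∀ j, Measurable (X j))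
    (hbdd : ∀ j, ∀ᵐ ω ∂P, 0 ≤ X j ω ∧ X j ω ≤ b) (hN₀ : 0 < N₀) (hμ : 0 < μ) {N : ℕ}
    (hN : 1 ≤ N) (k : ℕ) :
    ∫ ω, (N / (∑ j ∈ range N, X j ω + N₀)) ^ k ∂P
      ≤ (2 / μ) ^ k + P.real {ω | ∑ j ∈ range N, X j ω ≤ N * μ / 2} * (N / N₀) ^ k := by
  have hN' : (0 : ℝ) < N := by exact_mod_cast hN
  have hE : MeasurableSet {ω | ∑ j ∈ range N, X j ω ≤ N * μ / 2} :=
    measurableSet_le (Finset.measurable_sum _ fun j _ ↦ hmeas j) measurable_const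
  have h := integral_le_add_measureReal_mul (P := P) hE (by positivity : 0 ≤ (2 / μ) ^ k)
    (f := fun ω ↦ (N / (∑ j ∈ range N, X j ω + N₀)) ^ k) (A := (N / N₀) ^ k) ?_ ?_ ?_
  · simpa using h
  all_goals filter_upwards [ae_sum_range_mem_Icc hbdd N] with ω ⟨hS0, _⟩
  · positivity
  · gcongr
    linarith
  · intro hω
    simp only [not_le] at hω
    calc (N / (∑ j ∈ range N, X j ω + N₀)) ^ k ≤ (N / (N * μ / 2)) ^ k := by
          gcongr
          linarith
      _ = (2 / μ) ^ k := by field_simp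

end

theorem scaled_inv_pow_sum_expectation_bounded_general
    {Ω : Type*} [MeasurableSpace Ω] (P : Measure Ω) [IsProbabilityMeasure P]
    (k : ℕ) (N₀ : ℝ) (hN₀ : 0 < N₀)
    (μ b : ℝ) (hμ : 0 < μ) (hμb : μ ≤ b)
    (X : ℕ → Ω → ℝ) (hmeas : ∀ j, Measurable (X j))
    (hindep : iIndepFun X P)
    (hbdd : ∀ j, ∀ᵐ ω ∂P, 0 ≤ X j ω ∧ X j ω ≤ b)
    (hmean : ∀ j, μ ≤ ∫ ω, X j ω ∂P) :
    ∃ c₁ > (0 : ℝ), ∃ c₂ > (0 : ℝ), ∀ N : ℕ, 1 ≤ N →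
      c₁ ≤ (∫ ω, (N : ℝ) ^ k / (∑ j ∈ Finset.range N, X j ω + N₀) ^ k ∂P) ∧
      (∫ ω, (N : ℝ) ^ k / (∑ j ∈ Finset.range N, X j ω + N₀) ^ k ∂P) ≤ c₂ := by
  have hb : 0 < b := hμ.trans_le hμb
  set c := (μ / b) ^ 2 / 2
  refine ⟨(b + N₀)⁻¹ ^ k, by positivity, (2 / μ) ^ k + k ! / (c * N₀) ^ k, by positivity,
    fun N hN ↦ ?_⟩
  simp_rw [← div_pow]
  refine ⟨inv_add_pow_le_integral_div_sum_range_add_pow hmeas hbdd hN₀ hN k, ?_⟩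
  calc _ ≤ (2 / μ) ^ k + P.real {ω | ∑ j ∈ range N, X j ω ≤ N * μ / 2} * (N / N₀) ^ k :=
        integral_div_sum_range_add_pow_le hmeas hbdd hN₀ hμ hN k
    _ ≤ (2 / μ) ^ k + exp (-(c * N)) * (N / N₀) ^ k := by
        gcongr
        exact measureReal_sum_range_le_half_le_exp hmeas hindep hbdd hμ.le hmean N
    _ = (2 / μ) ^ k + (N / N₀) ^ k * exp (-(c * N₀ * (N / N₀))) := by
        rw [mul_comm (exp _)]
        field_simp
    _ ≤ (2 / μ) ^ k + k ! / (c * N₀) ^ k := by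
        gcongr
        exact pow_mul_exp_neg_mul_le_factorial_div (by positivity) (by positivity) k

/-- For independent random variables `X_j` bounded in `[0, b]` a.s. with
means at least `μ > 0`, the expectation `E[N^k/(∑_{j<N} X_j + N₀)^k]` is bounded between
two positive constants, uniformly in `N ≥ 1`. -/
theorem scaled_inv_pow_sum_expectation_bounded
    {Ω : Type*} [MeasurableSpace Ω] (P : Measure Ω) [IsProbabilityMeasure P]
    (k : ℕ) (hk : 1 ≤ k) (N₀ : ℝ) (hN₀ : 0 < N₀)
    (μ b : ℝ) (hμ : 0 < μ) (hμb : μ ≤ b)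
    (X : ℕ → Ω → ℝ) (hmeas : ∀ j, Measurable (X j))
    (hindep : iIndepFun X P)
    (hbdd : ∀ j, ∀ᵐ ω ∂P, 0 ≤ X j ω ∧ X j ω ≤ b)
    (hmean : ∀ j, μ ≤ ∫ ω, X j ω ∂P) :
    ∃ c₁ > (0 : ℝ), ∃ c₂ > (0 : ℝ), ∀ N : ℕ, 1 ≤ N →
      c₁ ≤ (∫ ω, (N : ℝ) ^ k / (∑ j ∈ Finset.range N, X j ω + N₀) ^ k ∂P) ∧
      (∫ ω, (N : ℝ) ^ k / (∑ j ∈ Finset.range N, X j ω + N₀) ^ k ∂P) ≤ c₂ :=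
  scaled_inv_pow_sum_expectation_bounded_general P k N₀ hN₀ μ b hμ hμb X hmeas hindep hbdd hmean
end

section
/- Let X be a finite nonempty set, let s : X → ℝ, and let Z be a nonempty compact subset of ℝ^X such that every z ∈ Z satisfies z(x) ≥ 0 for all x and Σ_{x∈X} z(x) = 1. For k ≥ 1 define l^k(z) = Σ_{x∈X} (−1)^{k+1} s(x)^k · z(x), set S^0 = Z and S^k = { z ∈ S^{k−1} : l^k(z) ≥ l^k(w) for all w ∈ S^{k−1} }. If z and ẑ both belong to ∩_{k=1}^∞ S^k, then they induce the same pushforward distribution under s: for every real value v, Σ_{x∈X : s(x)=v} z(x) = Σ_{x∈X : s(x)=v} ẑ(x). -/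
open Finset

/-- The `k`-th sensitivity functional `l^k(z) = ∑_x (−1)^{k+1} s(x)^k z(x)`. -/
noncomputable def sensFun {X : Type*} [Fintype X] (s : X → ℝ) (k : ℕ) (z : X → ℝ) : ℝ :=
  ∑ x, (-1 : ℝ) ^ (k + 1) * s x ^ k * z x

/-- The iterated sets of `k`-th sensitive policies: `S^0 = Z` and `S^k` is the set of
maximizers of `l^k` over `S^{k−1}`. -/
def sensSet {X : Type*} [Fintype X] (s : X → ℝ) (Z : Set (X → ℝ)) : ℕ → Set (X → ℝ)
  | 0 => Z
  | k + 1 => {z ∈ sensSet s Z k | ∀ w ∈ sensSet s Z k, sensFun s (k + 1) w ≤ sensFun s (k + 1) z}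

/-
Two maximisers of `l^k` over the same set take the same value of `l^k`, so any two infinitely
sensitive policies have equal `l^k` for all `k ≥ 1`, i.e. equal moments `∑ s(x)^k z(x)`; the
zeroth moments agree because both are probability vectors. A finitely supported distribution on
the finite set `s(X)` is determined by its moments: the indicator of `{v}` agrees on `s(X)` with
a polynomial (Lagrange interpolation), so the mass at `v` is a linear combination of moments.
-/

open Polynomial

section Moments

variable {ι K : Type*} [Fintype ι] [Field K]

theorem exists_polynomial_eval_eq_indicator [DecidableEq K] (T : Finset K) (v : K) :
    ∃ p : K[X], ∀ t ∈ T, p.eval t = if t = v then 1 else 0 :=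
  ⟨Lagrange.interpolate T id (fun t => if t = v then 1 else 0),
    fun _ ht => Lagrange.eval_interpolate_at_node _ (Set.injOn_id _) ht⟩

theorem sum_eval_mul_eq_sum_coeff_mul_moment (p : K[X]) (s z : ι → K) :
    ∑ x, p.eval (s x) * z x
      = ∑ k ∈ range (p.natDegree + 1), p.coeff k * ∑ x, s x ^ k * z x := by
  simp_rw [eval_eq_sum_range, sum_mul, mul_sum, ← mul_assoc]
  exact sum_comm

theorem sum_filter_eq_of_moments_eq [DecidableEq K] {s z w : ι → K}
    (hmom : ∀ k : ℕ, ∑ x, s x ^ k * z x = ∑ x, s x ^ k * w x) (v : K) :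
    ∑ x ∈ univ.filter (fun x => s x = v), z x = ∑ x ∈ univ.filter (fun x => s x = v), w x := by
  obtain ⟨p, hp⟩ := exists_polynomial_eval_eq_indicator (univ.image s) v
  have hmass : ∀ u : ι → K,
      ∑ x ∈ univ.filter (fun x => s x = v), u x = ∑ x, p.eval (s x) * u x := by
    intro u
    rw [sum_filter]
    refine sum_congr rfl fun x _ => ?_
    rw [hp _ (mem_image_of_mem s (mem_univ x))]
    split_ifs <;> simp
  simp only [hmass, sum_eval_mul_eq_sum_coeff_mul_moment, hmom]

end Moments

section Sensitivity

variable {X : Type*} [Fintype X] {s : X → ℝ} {Z : Set (X → ℝ)}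

theorem sensFun_eq (s : X → ℝ) (k : ℕ) (z : X → ℝ) :
    sensFun s k z = (-1) ^ (k + 1) * ∑ x, s x ^ k * z x := by
  simp only [sensFun, mul_sum, mul_assoc]

theorem sensSet_succ_subset (k : ℕ) : sensSet s Z (k + 1) ⊆ sensSet s Z k :=
  fun _ hz => hz.1

theorem mem_sensSet_of_mem_iInter {z : X → ℝ} (hz : z ∈ ⋂ k : ℕ, sensSet s Z (k + 1))
    (k : ℕ) : z ∈ sensSet s Z k := by
  cases k with
  | zero => exact sensSet_succ_subset 0 (Set.mem_iInter.mp hz 0)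
  | succ k => exact Set.mem_iInter.mp hz k

theorem sensFun_eq_of_mem_sensSet {k : ℕ} {z w : X → ℝ} (hz : z ∈ sensSet s Z (k + 1))
    (hw : w ∈ sensSet s Z (k + 1)) : sensFun s (k + 1) z = sensFun s (k + 1) w :=
  le_antisymm (hw.2 z hz.1) (hz.2 w hw.1)

theorem moment_eq_of_mem_sensSet {k : ℕ} {z w : X → ℝ} (hz : z ∈ sensSet s Z (k + 1))
    (hw : w ∈ sensSet s Z (k + 1)) :
    ∑ x, s x ^ (k + 1) * z x = ∑ x, s x ^ (k + 1) * w x := by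
  have h := sensFun_eq_of_mem_sensSet hz hw
  rw [sensFun_eq, sensFun_eq] at h
  exact mul_left_cancel₀ (pow_ne_zero _ (by norm_num)) h

end Sensitivity

theorem infinitely_sensitive_same_pushforward_general
    {X : Type*} [Fintype X]
    (s : X → ℝ) (Z : Set (X → ℝ))
    (hZprob : ∀ z ∈ Z, (∀ x, 0 ≤ z x) ∧ ∑ x, z x = 1)
    (z zhat : X → ℝ)
    (hz : z ∈ ⋂ k : ℕ, sensSet s Z (k + 1))
    (hzhat : zhat ∈ ⋂ k : ℕ, sensSet s Z (k + 1)) :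
    ∀ v : ℝ, ∑ x ∈ Finset.univ.filter (fun x => s x = v), z x
      = ∑ x ∈ Finset.univ.filter (fun x => s x = v), zhat x := by
  have hmom : ∀ k : ℕ, ∑ x, s x ^ k * z x = ∑ x, s x ^ k * zhat x
    | 0 => by
      simp only [pow_zero, one_mul, (hZprob z (mem_sensSet_of_mem_iInter hz 0)).2,
        (hZprob zhat (mem_sensSet_of_mem_iInter hzhat 0)).2]
    | k + 1 => moment_eq_of_mem_sensSet (mem_sensSet_of_mem_iInter hz (k + 1))
        (mem_sensSet_of_mem_iInter hzhat (k + 1))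
  exact sum_filter_eq_of_moments_eq hmom

/-- Any two members of the set of infinitely sensitive policies
`∩_{k≥1} S^k` induce the same pushforward distribution under `s`: for every real
value `v`, the total mass they put on `{x : s(x) = v}` coincides. -/
theorem infinitely_sensitive_same_pushforward
    {X : Type*} [Fintype X] [Nonempty X]
    (s : X → ℝ) (Z : Set (X → ℝ)) (hZne : Z.Nonempty) (hZcomp : IsCompact Z)
    (hZprob : ∀ z ∈ Z, (∀ x, 0 ≤ z x) ∧ ∑ x, z x = 1)
    (z zhat : X → ℝ)
    (hz : z ∈ ⋂ k : ℕ, sensSet s Z (k + 1))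
    (hzhat : zhat ∈ ⋂ k : ℕ, sensSet s Z (k + 1)) :
    ∀ v : ℝ, ∑ x ∈ Finset.univ.filter (fun x => s x = v), z x
      = ∑ x ∈ Finset.univ.filter (fun x => s x = v), zhat x :=
  infinitely_sensitive_same_pushforward_general s Z hZprob z zhat hz hzhat
end
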